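/- For the composite Lyapunov function V = (1/2) s^T m̄ s + (1/2)(σ̂ − σ_m)², the closed-loop dynamics m̄ ṡ = −Λ s + σ − σ̂ (s/||s||) with ||σ|| ≤ σ_m and adaptive law σ̂' = ||s|| − ν σ̂ yield V̇ ≤ −λ_min(Λ)||s||² − (ν/2)((σ̂ − σ_m)² − σ_m²) whenever s ≠ 0. -/

import Mathlib

/-!
Along the closed loop, `m ⟪s, ṡ⟫ = -⟪Λ s, s⟫ + ⟪σ, s⟫ - σ̂ ‖s‖` because the switching term is
radial, while the adaptive law contributes `(σ̂ - σ_m)(‖s‖ - ν σ̂)`. The `σ̂ ‖s‖` terms cancel,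
leaving `⟪σ, s⟫ - σ_m ‖s‖ ≤ 0` by Cauchy–Schwarz; the Rayleigh bound controls `⟪Λ s, s⟫`, and
completing the square turns `-ν (σ̂ - σ_m) σ̂` into `-(ν / 2)((σ̂ - σ_m)² - σ_m²)`.
-/

open Matrix

open scoped RealInnerProductSpace

namespace Matrix.IsHermitian

variable {n : Type*} [Fintype n] [DecidableEq n] {A : Matrix n n ℝ} (hA : A.IsHermitian)

theorem toEuclideanLin_eigenvectorBasis (i : n) :
    toEuclideanLin A (hA.eigenvectorBasis i) = hA.eigenvalues i • hA.eigenvectorBasis i := by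
  ext j
  simpa [toLpLin_apply] using congrFun (hA.mulVec_eigenvectorBasis i) j

theorem inner_toEuclideanLin_self_eq_sum (x : EuclideanSpace ℝ n) :
    ⟪toEuclideanLin A x, x⟫ = ∑ i, hA.eigenvalues i * ⟪hA.eigenvectorBasis i, x⟫ ^ 2 := by
  rw [← hA.eigenvectorBasis.sum_inner_mul_inner]
  refine Finset.sum_congr rfl fun i _ => ?_
  rw [(isSymmetric_toEuclideanLin_iff.mpr hA) x, toEuclideanLin_eigenvectorBasis,
    real_inner_smul_right, real_inner_comm]
  ring

theorem iInf_eigenvalues_mul_norm_sq_le_inner (x : EuclideanSpace ℝ n) :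
    (⨅ i, hA.eigenvalues i) * ‖x‖ ^ 2 ≤ ⟪toEuclideanLin A x, x⟫ := by
  rw [hA.inner_toEuclideanLin_self_eq_sum, ← hA.eigenvectorBasis.sum_sq_inner_right,
    Finset.mul_sum]
  gcongr with i
  exact ciInf_le (Set.finite_range _).bddBelow i

end Matrix.IsHermitian

theorem real_inner_div_norm_smul_self {E : Type*} [NormedAddCommGroup E] [InnerProductSpace ℝ E]
    {x : E} (hx : x ≠ 0) (c : ℝ) : ⟪(c / ‖x‖) • x, x⟫ = c * ‖x‖ := by
  rw [real_inner_smul_left, real_inner_self_eq_norm_sq]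
  field_simp [norm_ne_zero_iff.mpr hx]

theorem real_inner_le_mul_norm_of_norm_le {E : Type*} [NormedAddCommGroup E]
    [InnerProductSpace ℝ E] {x y : E} {r : ℝ} (hx : ‖x‖ ≤ r) : ⟪x, y⟫ ≤ r * ‖y‖ :=
  (real_inner_le_norm x y).trans (mul_le_mul_of_nonneg_right hx (norm_nonneg y))

-- The two sides differ by `ν / 2 * a ^ 2`.
theorem half_mul_sq_sub_sq_le_mul_sub_mul {ν : ℝ} (hν : 0 ≤ ν) (a b : ℝ) :
    ν / 2 * ((a - b) ^ 2 - b ^ 2) ≤ ν * (a - b) * a := by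
  nlinarith [mul_nonneg hν (sq_nonneg a)]

theorem composite_lyapunov_derivative_bound_general
    (s σ : ℝ → EuclideanSpace ℝ (Fin 3)) (hs : Differentiable ℝ s)
    (Λ : Matrix (Fin 3) (Fin 3) ℝ) (hΛ : Λ.PosDef)
    (m σ_m ν : ℝ) (hν : 0 < ν) (hσ : ∀ t, ‖σ t‖ ≤ σ_m)
    (σhat : ℝ → ℝ) (hσd : Differentiable ℝ σhat)
    (hdyn : ∀ t, m • deriv s t
      = -Matrix.toEuclideanLin Λ (s t) + σ t - (σhat t / ‖s t‖) • s t)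
    (hadapt : ∀ t, deriv σhat t = ‖s t‖ - ν * σhat t)
    (V : ℝ → ℝ)
    (hV : ∀ t, V t = (1 / 2) * m * ‖s t‖ ^ 2 + (1 / 2) * (σhat t - σ_m) ^ 2) :
    ∀ t, s t ≠ 0 →
      deriv V t ≤ -(⨅ i, hΛ.1.eigenvalues i) * ‖s t‖ ^ 2
        - (ν / 2) * ((σhat t - σ_m) ^ 2 - σ_m ^ 2) := by
  intro t hst
  have hV' : HasDerivAt V
      (m * ⟪s t, deriv s t⟫ + (σhat t - σ_m) * deriv σhat t) t := by
    rw [funext hV]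
    refine ((((hs t).hasDerivAt.norm_sq).const_mul (1 / 2 * m)).add
      ((((hσd t).hasDerivAt.sub_const σ_m).pow 2).const_mul (1 / 2))).congr_deriv ?_
    norm_num only [Nat.cast_ofNat, pow_one]
    ring
  have hinner : m * ⟪s t, deriv s t⟫
      = -⟪toEuclideanLin Λ (s t), s t⟫ + ⟪σ t, s t⟫ - σhat t * ‖s t‖ := by
    rw [real_inner_comm, ← real_inner_smul_left, hdyn t, inner_sub_left, inner_add_left,
      inner_neg_left, real_inner_div_norm_smul_self hst]
  rw [hV'.deriv, hinner, hadapt t]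
  have hΛs := hΛ.1.iInf_eigenvalues_mul_norm_sq_le_inner (s t)
  have hσs := real_inner_le_mul_norm_of_norm_le (y := s t) (hσ t)
  have hσhat := half_mul_sq_sub_sq_le_mul_sub_mul hν.le (σhat t) σ_m
  linarith

theorem composite_lyapunov_derivative_bound
    (s σ : ℝ → EuclideanSpace ℝ (Fin 3)) (hs : Differentiable ℝ s)
    (Λ : Matrix (Fin 3) (Fin 3) ℝ) (hΛ : Λ.PosDef)
    (m σ_m ν : ℝ) (hm : 0 < m) (hν : 0 < ν) (hσ : ∀ t, ‖σ t‖ ≤ σ_m)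
    (σhat : ℝ → ℝ) (hσd : Differentiable ℝ σhat)
    (hdyn : ∀ t, m • deriv s t
      = -Matrix.toEuclideanLin Λ (s t) + σ t - (σhat t / ‖s t‖) • s t)
    (hadapt : ∀ t, deriv σhat t = ‖s t‖ - ν * σhat t)
    (V : ℝ → ℝ)
    (hV : ∀ t, V t = (1 / 2) * m * ‖s t‖ ^ 2 + (1 / 2) * (σhat t - σ_m) ^ 2) :
    ∀ t, s t ≠ 0 →
      deriv V t ≤ -(⨅ i, hΛ.1.eigenvalues i) * ‖s t‖ ^ 2
        - (ν / 2) * ((σhat t - σ_m) ^ 2 - σ_m ^ 2) :=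
  composite_lyapunov_derivative_bound_general s σ hs Λ hΛ m σ_m ν hν hσ σhat hσd hdyn hadapt V hV
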